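/- arXiv:2409.16423 — 2 statements merged into one kernel-verified Lean document; each statement's English description precedes it below -/
import Mathlib

section
/- For every integer n ≥ 1 and every p ∈ I_n, one has w_{p,n} > 0, the vector v_p := (s_p, h_{p,0}, 1 − s_p)ᵀ ∈ ℝ³ has all entries positive, and M_p · v_p = (1/w_{p,n}) · v_p; that is, v_p is an eigenvector of M_p with eigenvalue 1/w_{p,n}. -/
open Matrix

noncomputable section

/-- `M1 = [[1,1,0],[0,1,0],[0,0,1]]`. -/
def M1 : Matrix (Fin 3) (Fin 3) ℝ := !![1, 1, 0; 0, 1, 0; 0, 0, 1]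

/-- `M2 = [[1,0,0],[1,1,1],[0,0,1]]`. -/
def M2 : Matrix (Fin 3) (Fin 3) ℝ := !![1, 0, 0; 1, 1, 1; 0, 0, 1]

/-- `M3 = [[1,0,0],[0,1,0],[0,1,1]]`. -/
def M3 : Matrix (Fin 3) (Fin 3) ℝ := !![1, 0, 0; 0, 1, 0; 0, 1, 1]

/- A tuple `p = (p_n, p_n', q_n, …, p_1, p_1', q_1) ∈ ℕ₀^{3n}` is encoded by three
functions `P P' Q : Fin n → ℕ`, where the index `i : Fin n` corresponds to the
subscript `i + 1` (so `P ⟨0,_⟩ = p_1`, …, `P ⟨n-1,_⟩ = p_n`). -/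

/-- The transition matrix `M_p = M1^{p_n} M3^{p_n'} M2^{q_n} ⋯ M1^{p_1} M3^{p_1'} M2^{q_1}`. -/
def Mp (n : ℕ) (P P' Q : Fin n → ℕ) : Matrix (Fin 3) (Fin 3) ℝ :=
  ((List.finRange n).map fun i => M1 ^ P i.rev * M3 ^ P' i.rev * M2 ^ Q i.rev).prod

/-- Membership of the tuple `p` in `I_n`. -/
def memI (n : ℕ) (P P' Q : Fin n → ℕ) : Prop :=
  (∀ i, 0 < Q i) ∧ (∀ i, 0 < P i + P' i) ∧ (∃ j, 0 < P j) ∧ (∃ k, 0 < P' k)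

/-- Finite continued fraction: `cf [a₁, …, a_m] x = 1/(a₁ + 1/(a₂ + ⋯ + 1/(a_m + x)))`. -/
def cf (l : List ℕ) (x : ℝ) : ℝ := l.foldr (fun a y => 1 / (a + y)) x

/-- The (0-indexed) block index `k(j+1) - 1 = n - 1 - (j mod n)` used at step `j + 1`. -/
def blk (n : ℕ) (hn : 0 < n) (j : ℕ) : Fin n :=
  ⟨n - 1 - j % n, lt_of_le_of_lt (Nat.sub_le _ _) (Nat.sub_lt hn one_pos)⟩

/-- The sequence `(a₁, …, a_{2n}) = (p_n + p_n', q_n, …, p_1 + p_1', q_1)` as a list. -/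
def aList (n : ℕ) (hn : 0 < n) (P P' Q : Fin n → ℕ) : List ℕ :=
  (List.range n).flatMap fun i => [P (blk n hn i) + P' (blk n hn i), Q (blk n hn i)]

/-- `isH0 n hn P P' Q h0` says that `h0` is the number `h_{p,0}`: a real number in `(0,1)`
that is a fixed point of `x ↦ 1/(a₁ + 1/(a₂ + ⋯ + 1/(a_{2n} + x)))` (there is exactly one). -/
def isH0 (n : ℕ) (hn : 0 < n) (P P' Q : Fin n → ℕ) (h0 : ℝ) : Prop :=
  h0 ∈ Set.Ioo (0 : ℝ) 1 ∧ cf (aList n hn P P' Q) h0 = h0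

/-- The pair `(w_{p,j}, h_{p,j})`, with `w_{p,0} = 1`, `h_{p,0} = h0`, and for `j ≥ 1`:
`w_{p,j} = w_{p,j-1} − (p_{k(j)} + p'_{k(j)}) h_{p,j-1}`, `h_{p,j} = h_{p,j-1} − q_{k(j)} w_{p,j}`. -/
def wh (n : ℕ) (hn : 0 < n) (P P' Q : Fin n → ℕ) (h0 : ℝ) : ℕ → ℝ × ℝ
  | 0 => (1, h0)
  | j + 1 =>
    let prev := wh n hn P P' Q h0 j
    let b := blk n hn j
    let w := prev.1 - ((P b : ℝ) + (P' b : ℝ)) * prev.2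
    (w, prev.2 - (Q b : ℝ) * w)

/-- The width `w_{p,j}`. -/
def wseq (n : ℕ) (hn : 0 < n) (P P' Q : Fin n → ℕ) (h0 : ℝ) (j : ℕ) : ℝ :=
  (wh n hn P P' Q h0 j).1

/-- The height `h_{p,j}`. -/
def hseq (n : ℕ) (hn : 0 < n) (P P' Q : Fin n → ℕ) (h0 : ℝ) (j : ℕ) : ℝ :=
  (wh n hn P P' Q h0 j).2

/-- The split ratio `s_p = Σ_{i=0}^∞ p_{k(i+1)} h_{p,i}`. -/
def splitRatio (n : ℕ) (hn : 0 < n) (P P' Q : Fin n → ℕ) (h0 : ℝ) : ℝ :=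
  ∑' i : ℕ, (P (blk n hn i) : ℝ) * hseq n hn P P' Q h0 i

/-- The reindexing realizing the shift `T`: the tuple `T(p)` is given by the functions
`P ∘ shiftIdx n hn`, `P' ∘ shiftIdx n hn`, `Q ∘ shiftIdx n hn`. -/
def shiftIdx (n : ℕ) (hn : 0 < n) (i : Fin n) : Fin n :=
  ⟨(i.val + (n - 1)) % n, Nat.mod_lt _ hn⟩


section Aux

lemma cf_nil (x : ℝ) : cf [] x = x := rfl
lemma cf_cons (a : ℕ) (l : List ℕ) (x : ℝ) : cf (a :: l) x = 1 / (a + cf l x) := rfl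
lemma cf_append (l1 l2 : List ℕ) (x : ℝ) : cf (l1 ++ l2) x = cf l1 (cf l2 x) := by
  simp [cf, List.foldr_append]

lemma cf_pos {x : ℝ} (hx : 0 < x) (l : List ℕ) : 0 < cf l x := by
  induction l with
  | nil => exact hx
  | cons a l ih =>
    rw [cf_cons]
    exact one_div_pos.mpr (add_pos_of_nonneg_of_pos (Nat.cast_nonneg a) ih)

lemma cf_le_one {x : ℝ} (hx : 0 < x) (hx1 : x ≤ 1) {l : List ℕ} (hl : ∀ a ∈ l, 1 ≤ a) :
    cf l x ≤ 1 := by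
  cases l with
  | nil => exact hx1
  | cons a l =>
    have h1 : (1:ℝ) ≤ a := by exact_mod_cast hl a (by simp)
    have h2 : 0 < cf l x := cf_pos hx l
    rw [cf_cons, div_le_one (by linarith)]
    linarith

lemma cf_lt_one {x : ℝ} (hx : 0 < x) {a : ℕ} {l : List ℕ} (ha : 1 ≤ a) :
    cf (a :: l) x < 1 := by
  have h1 : (1:ℝ) ≤ a := by exact_mod_cast ha
  have h2 : 0 < cf l x := cf_pos hx l
  rw [cf_cons, div_lt_one (by linarith)]
  linarith

def foldWH : List (ℕ × ℕ) → ℝ × ℝ → ℝ × ℝ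
  | [], s => s
  | ab :: L, s =>
    foldWH L (s.1 - (ab.1 : ℝ) * s.2, s.2 - (ab.2 : ℝ) * (s.1 - (ab.1 : ℝ) * s.2))

lemma foldWH_cons (ab : ℕ × ℕ) (L : List (ℕ × ℕ)) (s : ℝ × ℝ) :
    foldWH (ab :: L) s =
      foldWH L (s.1 - (ab.1 : ℝ) * s.2, s.2 - (ab.2 : ℝ) * (s.1 - (ab.1 : ℝ) * s.2)) := rfl

lemma foldWH_nil (s : ℝ × ℝ) : foldWH [] s = s := rfl

lemma foldWH_append (L1 L2 : List (ℕ × ℕ)) (s : ℝ × ℝ) :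
    foldWH (L1 ++ L2) s = foldWH L2 (foldWH L1 s) := by
  induction L1 generalizing s with
  | nil => rfl
  | cons ab L ih => simp [foldWH, ih]

lemma keyLemma : ∀ (L : List (ℕ × ℕ)) {x : ℝ}, 0 < x →
    (∀ p ∈ L, 1 ≤ p.1 ∧ 1 ≤ p.2) → ∀ {w : ℝ}, 0 < w →
    0 < (foldWH L (w, w * cf (L.flatMap fun p => [p.1, p.2]) x)).1 ∧
    (foldWH L (w, w * cf (L.flatMap fun p => [p.1, p.2]) x)).2 =
      (foldWH L (w, w * cf (L.flatMap fun p => [p.1, p.2]) x)).1 * x ∧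
    (foldWH L (w, w * cf (L.flatMap fun p => [p.1, p.2]) x)).1 ≤ w ∧
    (L ≠ [] → (foldWH L (w, w * cf (L.flatMap fun p => [p.1, p.2]) x)).1 < w) := by
  intro L
  induction L with
  | nil =>
    intro x hx _ w hw
    refine ⟨by simpa [foldWH, cf_nil] using hw, by simp [foldWH, cf_nil], by simp [foldWH, cf_nil], fun h => absurd rfl h⟩
  | cons ab L ih =>
    intro x hx hL w hw
    obtain ⟨a, b⟩ := ab
    have hab := hL (a, b) (by simp)
    have ha : (1:ℝ) ≤ a := by exact_mod_cast hab.1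
    have hb : (1:ℝ) ≤ b := by exact_mod_cast hab.2
    set t := cf (L.flatMap fun p => [p.1, p.2]) x with ht_def
    have ht : 0 < t := cf_pos hx _
    have hflat : ((a, b) :: L).flatMap (fun p => [p.1, p.2]) =
        a :: b :: L.flatMap (fun p => [p.1, p.2]) := by simp
    set v : ℝ := 1 / (b + t) with hv_def
    set u : ℝ := 1 / (a + v) with hu_def
    have hbt : (0:ℝ) < b + t := by linarith
    have hv : 0 < v := one_div_pos.mpr hbt
    have hv1 : v < 1 := by rw [hv_def, div_lt_one hbt]; linarith
    have hav : (0:ℝ) < a + v := by linarith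
    have hu : 0 < u := one_div_pos.mpr hav
    have hu1 : u < 1 := by rw [hu_def, div_lt_one hav]; linarith
    have hveq : v * (b + t) = 1 := by rw [hv_def]; field_simp
    have hueq : u * (a + v) = 1 := by rw [hu_def]; field_simp
    have hcf : cf (((a, b) :: L).flatMap fun p => [p.1, p.2]) x = u := by
      rw [hflat, cf_cons, cf_cons, ← ht_def, ← hv_def, ← hu_def]
    have hstep : foldWH ((a, b) :: L) (w, w * u)
        = foldWH L (w * u * v, (w * u * v) * t) := by
      have e1 : w - (a:ℝ) * (w * u) = w * u * v := by
        have : 1 - (a:ℝ) * u = u * v := by nlinarith [hueq]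
        nlinarith [this]
      have e2 : w * u - (b:ℝ) * (w * u * v) = (w * u * v) * t := by
        have : 1 - (b:ℝ) * v = v * t := by nlinarith [hveq]
        nlinarith [this]
      rw [foldWH_cons, e1, e2]
    have hw1 : 0 < w * u * v := by positivity
    have hrec := ih hx (fun p hp => hL p (by simp [hp])) hw1
    rw [hcf, hstep]
    rw [← ht_def] at hrec
    have h1 : w * u < w := by
      have := mul_lt_mul_of_pos_left hu1 hw
      simpa using this
    have h2 : w * u * v < w * u := by
      have := mul_lt_mul_of_pos_left hv1 (mul_pos hw hu)
      calc w * u * v < w * u * 1 := this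
        _ = w * u := by ring
    refine ⟨hrec.1, hrec.2.1, ?_, fun _ => ?_⟩
    · have := hrec.2.2.1
      linarith
    · have := hrec.2.2.1
      linarith

/-! ### Bridge between `wh` and `foldWH` -/

def LF (n : ℕ) (hn : 0 < n) (P P' Q : Fin n → ℕ) : List (ℕ × ℕ) :=
  (List.range n).map fun i => (P (blk n hn i) + P' (blk n hn i), Q (blk n hn i))

lemma LF_length (n : ℕ) (hn : 0 < n) (P P' Q : Fin n → ℕ) :
    (LF n hn P P' Q).length = n := by simp [LF]

lemma LF_flat (n : ℕ) (hn : 0 < n) (P P' Q : Fin n → ℕ) :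
    (LF n hn P P' Q).flatMap (fun p => [p.1, p.2]) = aList n hn P P' Q := by
  simp [LF, aList, List.flatMap_map]

lemma LF_mem {n : ℕ} {hn : 0 < n} {P P' Q : Fin n → ℕ} (hI : memI n P P' Q) :
    ∀ p ∈ LF n hn P P' Q, 1 ≤ p.1 ∧ 1 ≤ p.2 := by
  intro p hp
  simp only [LF, List.mem_map, List.mem_range] at hp
  obtain ⟨i, _, rfl⟩ := hp
  exact ⟨hI.2.1 _, hI.1 _⟩

lemma wh_succ (n : ℕ) (hn : 0 < n) (P P' Q : Fin n → ℕ) (h0 : ℝ) (j : ℕ) :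
    wh n hn P P' Q h0 (j+1) =
      ((wh n hn P P' Q h0 j).1
          - ((P (blk n hn j) : ℝ) + (P' (blk n hn j) : ℝ)) * (wh n hn P P' Q h0 j).2,
       (wh n hn P P' Q h0 j).2 - (Q (blk n hn j) : ℝ) *
          ((wh n hn P P' Q h0 j).1
            - ((P (blk n hn j) : ℝ) + (P' (blk n hn j) : ℝ)) * (wh n hn P P' Q h0 j).2)) := rfl

lemma wh_eq_foldWH (n : ℕ) (hn : 0 < n) (P P' Q : Fin n → ℕ) (h0 : ℝ) :
    ∀ j, j ≤ n → wh n hn P P' Q h0 j = foldWH ((LF n hn P P' Q).take j) (1, h0) := by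
  intro j
  induction j with
  | zero => intro _; rfl
  | succ j ih =>
    intro hj
    have hj' : j < n := hj
    have hlen : j < (LF n hn P P' Q).length := by rw [LF_length]; exact hj'
    have hget : (LF n hn P P' Q)[j]'hlen
        = (P (blk n hn j) + P' (blk n hn j), Q (blk n hn j)) := by
      simp [LF]
    rw [List.take_succ, List.getElem?_eq_getElem hlen, foldWH_append, ← ih hj'.le, hget]
    rw [wh_succ, Option.toList_some, foldWH_cons, foldWH_nil]
    push_cast
    rfl


/-! ### Consequences of the continued fraction fixed point -/

lemma keyApplied {n : ℕ} {hn : 0 < n} {P P' Q : Fin n → ℕ} {h0 : ℝ}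
    (hI : memI n P P' Q) (hh0 : isH0 n hn P P' Q h0) :
    ∀ j, j ≤ n →
      0 < wseq n hn P P' Q h0 j ∧
      hseq n hn P P' Q h0 j = wseq n hn P P' Q h0 j *
        cf (((LF n hn P P' Q).drop j).flatMap fun p => [p.1, p.2]) h0 ∧
      wseq n hn P P' Q h0 j ≤ 1 ∧
      (0 < j → wseq n hn P P' Q h0 j < 1) := by
  intro j hj
  obtain ⟨⟨hh0p, hh0lt⟩, hfix⟩ := hh0
  set x' := cf (((LF n hn P P' Q).drop j).flatMap fun p => [p.1, p.2]) h0 with hx'_def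
  have hx' : 0 < x' := cf_pos hh0p _
  have hsplit : cf (((LF n hn P P' Q).take j).flatMap fun p => [p.1, p.2]) x' = h0 := by
    rw [hx'_def, ← cf_append, ← List.flatMap_append, List.take_append_drop, LF_flat]
    exact hfix
  have hmem : ∀ p ∈ (LF n hn P P' Q).take j, 1 ≤ p.1 ∧ 1 ≤ p.2 :=
    fun p hp => LF_mem hI p (List.mem_of_mem_take hp)
  have hk := keyLemma ((LF n hn P P' Q).take j) hx' hmem one_pos
  rw [hsplit, one_mul] at hk
  have hwh := wh_eq_foldWH n hn P P' Q h0 j hj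
  have hW : wseq n hn P P' Q h0 j = (foldWH ((LF n hn P P' Q).take j) (1, h0)).1 := by
    rw [wseq, hwh]
  have hH : hseq n hn P P' Q h0 j = (foldWH ((LF n hn P P' Q).take j) (1, h0)).2 := by
    rw [hseq, hwh]
  refine ⟨by rw [hW]; exact hk.1, by rw [hW, hH]; exact hk.2.1, by rw [hW]; exact hk.2.2.1,
    fun hjpos => ?_⟩
  rw [hW]
  apply hk.2.2.2
  have : ((LF n hn P P' Q).take j).length = j := by
    rw [List.length_take, LF_length]; omega
  intro hnil
  rw [hnil] at this
  simp at this
  omega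

lemma wn_pos {n : ℕ} {hn : 0 < n} {P P' Q : Fin n → ℕ} {h0 : ℝ}
    (hI : memI n P P' Q) (hh0 : isH0 n hn P P' Q h0) :
    0 < wseq n hn P P' Q h0 n := (keyApplied hI hh0 n le_rfl).1

lemma wn_lt_one {n : ℕ} {hn : 0 < n} {P P' Q : Fin n → ℕ} {h0 : ℝ}
    (hI : memI n P P' Q) (hh0 : isH0 n hn P P' Q h0) :
    wseq n hn P P' Q h0 n < 1 := (keyApplied hI hh0 n le_rfl).2.2.2 hn

lemma hn_eq {n : ℕ} {hn : 0 < n} {P P' Q : Fin n → ℕ} {h0 : ℝ}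
    (hI : memI n P P' Q) (hh0 : isH0 n hn P P' Q h0) :
    hseq n hn P P' Q h0 n = wseq n hn P P' Q h0 n * h0 := by
  have h := (keyApplied hI hh0 n le_rfl).2.1
  rw [show (LF n hn P P' Q).drop n = [] from by
    simp [List.drop_eq_nil_iff, LF_length]] at h
  simpa [cf_nil] using h

/-! ### Periodicity -/

lemma blk_add (n : ℕ) (hn : 0 < n) (q r : ℕ) : blk n hn (q * n + r) = blk n hn r := by
  apply Fin.ext
  show n - 1 - (q * n + r) % n = n - 1 - r % n
  rw [Nat.add_comm, Nat.add_mul_mod_self_right]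

lemma wh_shift {n : ℕ} {hn : 0 < n} {P P' Q : Fin n → ℕ} {h0 : ℝ}
    (hI : memI n P P' Q) (hh0 : isH0 n hn P P' Q h0) :
    ∀ j, wh n hn P P' Q h0 (j + n) =
      (wseq n hn P P' Q h0 n * (wh n hn P P' Q h0 j).1,
       wseq n hn P P' Q h0 n * (wh n hn P P' Q h0 j).2) := by
  intro j
  induction j with
  | zero =>
    rw [Nat.zero_add]
    have h2 := hn_eq hI hh0
    refine Prod.ext ?_ ?_
    · show wseq n hn P P' Q h0 n = _
      simp [wh]
    · show hseq n hn P P' Q h0 n = _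
      simpa [wh] using h2
  | succ j ih =>
    have hb : blk n hn (j + n) = blk n hn j := by
      have := blk_add n hn 1 j
      rwa [one_mul, Nat.add_comm] at this
    rw [show j + 1 + n = (j + n) + 1 from by omega, wh_succ, ih, wh_succ, hb]
    refine Prod.ext ?_ ?_ <;> · show _ = _; dsimp only; ring

lemma wh_rep {n : ℕ} {hn : 0 < n} {P P' Q : Fin n → ℕ} {h0 : ℝ}
    (hI : memI n P P' Q) (hh0 : isH0 n hn P P' Q h0) :
    ∀ q r, wh n hn P P' Q h0 (q * n + r) =
      (wseq n hn P P' Q h0 n ^ q * (wh n hn P P' Q h0 r).1,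
       wseq n hn P P' Q h0 n ^ q * (wh n hn P P' Q h0 r).2) := by
  intro q
  induction q with
  | zero => intro r; simp
  | succ q ih =>
    intro r
    rw [show (q + 1) * n + r = (q * n + r) + n from by ring, wh_shift hI hh0, ih]
    refine Prod.ext ?_ ?_ <;> · show _ = _; dsimp only; ring

lemma hseq_formula {n : ℕ} {hn : 0 < n} {P P' Q : Fin n → ℕ} {h0 : ℝ}
    (hI : memI n P P' Q) (hh0 : isH0 n hn P P' Q h0) (i : ℕ) :
    hseq n hn P P' Q h0 i =
      wseq n hn P P' Q h0 n ^ (i / n) * hseq n hn P P' Q h0 (i % n) := by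
  conv_lhs => rw [hseq, ← Nat.div_add_mod' i n, wh_rep hI hh0]
  rfl

lemma hseq_pos {n : ℕ} {hn : 0 < n} {P P' Q : Fin n → ℕ} {h0 : ℝ}
    (hI : memI n P P' Q) (hh0 : isH0 n hn P P' Q h0) (i : ℕ) :
    0 < hseq n hn P P' Q h0 i := by
  rw [hseq_formula hI hh0 i]
  have hmod : i % n ≤ n := (Nat.mod_lt i hn).le
  obtain ⟨hw, hh, -, -⟩ := keyApplied hI hh0 (i % n) hmod
  have : 0 < hseq n hn P P' Q h0 (i % n) := by
    rw [hh]
    exact mul_pos hw (cf_pos hh0.1.1 _)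
  exact mul_pos (pow_pos (wn_pos hI hh0) _) this

lemma blk_mod (n : ℕ) (hn : 0 < n) (i : ℕ) : blk n hn i = blk n hn (i % n) := by
  conv_lhs => rw [← Nat.div_add_mod' i n, blk_add]

/-! ### Summability -/

lemma summable_aux {n : ℕ} {hn : 0 < n} {P P' Q : Fin n → ℕ} {h0 : ℝ}
    (hI : memI n P P' Q) (hh0 : isH0 n hn P P' Q h0) (c : Fin n → ℕ) :
    Summable (fun i : ℕ => (c (blk n hn i) : ℝ) * hseq n hn P P' Q h0 i) := by
  haveI : NeZero n := ⟨hn.ne'⟩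
  rw [← Equiv.summable_iff (Nat.divModEquiv n).symm]
  have heq : ((fun i : ℕ => (c (blk n hn i) : ℝ) * hseq n hn P P' Q h0 i)
        ∘ (Nat.divModEquiv n).symm)
      = fun p : ℕ × Fin n => (wseq n hn P P' Q h0 n) ^ p.1 *
          ((c (blk n hn p.2) : ℝ) * hseq n hn P P' Q h0 p.2) := by
    funext p
    have h2 : ((p.2 : ℕ)) % n = (p.2 : ℕ) := Nat.mod_eq_of_lt p.2.isLt
    show (c (blk n hn (p.1 * n + (p.2 : ℕ))) : ℝ) * hseq n hn P P' Q h0 (p.1 * n + (p.2 : ℕ)) = _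
    rw [blk_add, hseq, wh_rep hI hh0]
    show (c (blk n hn (p.2 : ℕ)) : ℝ) *
      (wseq n hn P P' Q h0 n ^ p.1 * hseq n hn P P' Q h0 (p.2 : ℕ)) = _
    ring
  rw [heq]
  apply summable_mul_of_summable_norm (f := fun q : ℕ => wseq n hn P P' Q h0 n ^ q)
    (g := fun r : Fin n => (c (blk n hn r) : ℝ) * hseq n hn P P' Q h0 r)
  · have h1 : (0:ℝ) ≤ wseq n hn P P' Q h0 n := (wn_pos hI hh0).le
    have := summable_geometric_of_lt_one h1 (wn_lt_one hI hh0)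
    simpa [Real.norm_eq_abs, abs_pow, abs_of_nonneg h1] using this
  · exact Summable.of_finite

/-! ### Action of the matrix powers on vectors -/

lemma M1_mulVec (a b c : ℝ) : M1 *ᵥ ![a, b, c] = ![a + b, b, c] := by
  funext i
  fin_cases i <;>
    simp [M1, Matrix.mulVec, dotProduct, Fin.sum_univ_three]

lemma M2_mulVec (a b c : ℝ) : M2 *ᵥ ![a, b, c] = ![a, a + b + c, c] := by
  funext i
  fin_cases i <;>
    simp [M2, Matrix.mulVec, dotProduct, Fin.sum_univ_three] <;> ring

lemma M3_mulVec (a b c : ℝ) : M3 *ᵥ ![a, b, c] = ![a, b, b + c] := by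
  funext i
  fin_cases i <;>
    simp [M3, Matrix.mulVec, dotProduct, Fin.sum_univ_three]

lemma M1_pow_mulVec (p : ℕ) (a b c : ℝ) :
    (M1 ^ p) *ᵥ ![a, b, c] = ![a + p * b, b, c] := by
  induction p generalizing a with
  | zero => simp
  | succ p ih =>
    rw [pow_succ, ← Matrix.mulVec_mulVec, M1_mulVec, ih]
    funext i
    fin_cases i <;> simp <;> push_cast <;> ring

lemma M3_pow_mulVec (p : ℕ) (a b c : ℝ) :
    (M3 ^ p) *ᵥ ![a, b, c] = ![a, b, c + p * b] := by
  induction p generalizing c with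
  | zero => simp
  | succ p ih =>
    rw [pow_succ, ← Matrix.mulVec_mulVec, M3_mulVec, ih]
    funext i
    fin_cases i <;> simp <;> push_cast <;> ring

lemma M2_pow_mulVec (q : ℕ) (a b c : ℝ) :
    (M2 ^ q) *ᵥ ![a, b, c] = ![a, b + q * (a + c), c] := by
  induction q generalizing b with
  | zero => simp
  | succ q ih =>
    rw [pow_succ, ← Matrix.mulVec_mulVec, M2_mulVec, ih]
    funext i
    fin_cases i <;> simp <;> push_cast <;> ring

/-! ### The inverse step -/

def vecAt (n : ℕ) (hn : 0 < n) (P P' Q : Fin n → ℕ) (h0 : ℝ) (j : ℕ) : Fin 3 → ℝ :=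
  ![∑' i : ℕ, (P (blk n hn (i + j)) : ℝ) * hseq n hn P P' Q h0 (i + j),
    hseq n hn P P' Q h0 j,
    wseq n hn P P' Q h0 j -
      ∑' i : ℕ, (P (blk n hn (i + j)) : ℝ) * hseq n hn P P' Q h0 (i + j)]

lemma step_mulVec {n : ℕ} {hn : 0 < n} {P P' Q : Fin n → ℕ} {h0 : ℝ}
    (hI : memI n P P' Q) (hh0 : isH0 n hn P P' Q h0) (j : ℕ) :
    (M1 ^ P (blk n hn j) * M3 ^ P' (blk n hn j) * M2 ^ Q (blk n hn j)) *ᵥ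
      vecAt n hn P P' Q h0 (j + 1) = vecAt n hn P P' Q h0 j := by
  set b := blk n hn j with hb_def
  set s' := ∑' i : ℕ, (P (blk n hn (i + (j+1))) : ℝ) * hseq n hn P P' Q h0 (i + (j+1))
    with hs'_def
  set sj := ∑' i : ℕ, (P (blk n hn (i + j)) : ℝ) * hseq n hn P P' Q h0 (i + j) with hsj_def
  have hw : wseq n hn P P' Q h0 (j+1)
      = wseq n hn P P' Q h0 j - ((P b : ℝ) + (P' b : ℝ)) * hseq n hn P P' Q h0 j := rfl
  have hh : hseq n hn P P' Q h0 (j+1)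
      = hseq n hn P P' Q h0 j - (Q b : ℝ) * wseq n hn P P' Q h0 (j+1) := rfl
  have hsum : Summable (fun i : ℕ => (P (blk n hn i) : ℝ) * hseq n hn P P' Q h0 i) :=
    summable_aux hI hh0 P
  have htail : sj = (P b : ℝ) * hseq n hn P P' Q h0 j + s' := by
    have hs1 : Summable fun i : ℕ => (P (blk n hn (i + j)) : ℝ) * hseq n hn P P' Q h0 (i + j) :=
      (summable_nat_add_iff j).2 hsum
    rw [hsj_def, Summable.tsum_eq_zero_add hs1]
    congr 1
    · rw [Nat.zero_add]
    · rw [hs'_def]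
      have : ∀ i : ℕ, i + 1 + j = i + (j + 1) := fun i => by omega
      simp only [this]
  rw [vecAt, vecAt, ← hs'_def, ← hsj_def]
  rw [← Matrix.mulVec_mulVec, ← Matrix.mulVec_mulVec, M2_pow_mulVec]
  have hX : hseq n hn P P' Q h0 (j+1) + (Q b : ℝ) *
      (s' + (wseq n hn P P' Q h0 (j+1) - s')) = hseq n hn P P' Q h0 j := by
    rw [hh]; ring
  rw [hX, M3_pow_mulVec, M1_pow_mulVec]
  funext i
  fin_cases i
  · show s' + (P b : ℝ) * hseq n hn P P' Q h0 j = sj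
    linarith [htail]
  · rfl
  · show wseq n hn P P' Q h0 (j+1) - s' + (P' b : ℝ) * hseq n hn P P' Q h0 j
      = wseq n hn P P' Q h0 j - sj
    rw [hw]
    linarith [htail]

lemma prod_mulVec {n : ℕ} {hn : 0 < n} {P P' Q : Fin n → ℕ} {h0 : ℝ}
    (hI : memI n P P' Q) (hh0 : isH0 n hn P P' Q h0) :
    ∀ d, d ≤ n →
      ((((List.finRange n).drop (n - d)).map
          fun i => M1 ^ P i.rev * M3 ^ P' i.rev * M2 ^ Q i.rev).prod) *ᵥ
        vecAt n hn P P' Q h0 n = vecAt n hn P P' Q h0 (n - d) := by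
  intro d
  induction d with
  | zero =>
    intro _
    rw [Nat.sub_zero, show (List.finRange n).drop n = [] from by
      simp [List.drop_eq_nil_iff]]
    simp [Matrix.one_mulVec]
  | succ d ih =>
    intro hd
    have hjn : n - (d + 1) < n := by omega
    have hlen : n - (d + 1) < (List.finRange n).length := by
      simpa using hjn
    have hsucc : (n - (d + 1)) + 1 = n - d := by omega
    rw [List.drop_eq_getElem_cons hlen, List.map_cons, List.prod_cons,
      ← Matrix.mulVec_mulVec, hsucc, ih (by omega)]
    have hrev : ((List.finRange n)[n - (d + 1)]'hlen).rev = blk n hn (n - (d + 1)) := by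
      rw [List.getElem_finRange]
      apply Fin.ext
      simp [Fin.rev, blk, Nat.mod_eq_of_lt hjn]
      omega
    rw [hrev, ← hsucc]
    exact step_mulVec hI hh0 (n - (d + 1))

end Aux

/-- for `p ∈ I_n`, `w_{p,n} > 0`, the vector
`v_p = (s_p, h_{p,0}, 1 − s_p)ᵀ` has all positive entries, and
`M_p · v_p = (1/w_{p,n}) · v_p`. -/
theorem stmt0 (n : ℕ) (hn : 0 < n) (P P' Q : Fin n → ℕ) (hI : memI n P P' Q)
    (h0 : ℝ) (hh0 : isH0 n hn P P' Q h0) :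
    0 < wseq n hn P P' Q h0 n ∧
    (∀ i : Fin 3,
      0 < ![splitRatio n hn P P' Q h0, h0, 1 - splitRatio n hn P P' Q h0] i) ∧
    Mp n P P' Q *ᵥ ![splitRatio n hn P P' Q h0, h0, 1 - splitRatio n hn P P' Q h0]
      = (1 / wseq n hn P P' Q h0 n) •
        ![splitRatio n hn P P' Q h0, h0, 1 - splitRatio n hn P P' Q h0] := by
  set W := wseq n hn P P' Q h0 n with hW_def
  have hWpos : 0 < W := wn_pos hI hh0
  have hWlt : W < 1 := wn_lt_one hI hh0
  set s := splitRatio n hn P P' Q h0 with hs_def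
  set f := fun i : ℕ => (P (blk n hn i) : ℝ) * hseq n hn P P' Q h0 i with hf_def
  set g := fun i : ℕ => (P' (blk n hn i) : ℝ) * hseq n hn P P' Q h0 i with hg_def
  have hsumf : Summable f := summable_aux hI hh0 P
  have hsumg : Summable g := summable_aux hI hh0 P'
  have hs_tsum : s = ∑' i, f i := rfl
  have hblk_shift : ∀ i : ℕ, blk n hn (i + n) = blk n hn i := by
    intro i
    have := blk_add n hn 1 i
    rwa [one_mul, Nat.add_comm] at this
  have hh_shift : ∀ i : ℕ, hseq n hn P P' Q h0 (i + n) = W * hseq n hn P P' Q h0 i := by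
    intro i
    show (wh n hn P P' Q h0 (i + n)).2 = _
    rw [wh_shift hI hh0 i]
    rfl
  have hfshift : ∀ i : ℕ, f (i + n) = W * f i := by
    intro i
    rw [hf_def]
    dsimp only
    rw [hblk_shift, hh_shift]
    ring
  have hgshift : ∀ i : ℕ, g (i + n) = W * g i := by
    intro i
    rw [hg_def]
    dsimp only
    rw [hblk_shift, hh_shift]
    ring
  have htailf : (∑' i : ℕ, f (i + n)) = W * s := by
    simp only [hfshift]
    rw [tsum_mul_left, hs_tsum]
  have htailg : (∑' i : ℕ, g (i + n)) = W * ∑' i, g i := by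
    simp only [hgshift]
    rw [tsum_mul_left]
  have hsplitf : (∑ i ∈ Finset.range n, f i) + W * s = s := by
    rw [← htailf, hs_tsum]
    exact Summable.sum_add_tsum_nat_add n hsumf
  have hsplitg : (∑ i ∈ Finset.range n, g i) + W * ∑' i, g i = ∑' i, g i := by
    rw [← htailg]
    exact Summable.sum_add_tsum_nat_add n hsumg
  have hB : (∑ i ∈ Finset.range n, f i) + (∑ i ∈ Finset.range n, g i) = 1 - W := by
    rw [← Finset.sum_add_distrib]
    have hterm : ∀ i : ℕ, f i + g i
        = wseq n hn P P' Q h0 i - wseq n hn P P' Q h0 (i + 1) := by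
      intro i
      have : wseq n hn P P' Q h0 (i + 1) = wseq n hn P P' Q h0 i -
          ((P (blk n hn i) : ℝ) + (P' (blk n hn i) : ℝ)) * hseq n hn P P' Q h0 i := rfl
      rw [hf_def, hg_def]
      dsimp only
      rw [this]
      ring
    calc ∑ i ∈ Finset.range n, (f i + g i)
        = ∑ i ∈ Finset.range n, (wseq n hn P P' Q h0 i - wseq n hn P P' Q h0 (i + 1)) :=
          Finset.sum_congr rfl fun i _ => hterm i
      _ = wseq n hn P P' Q h0 0 - wseq n hn P P' Q h0 n :=
          Finset.sum_range_sub' (wseq n hn P P' Q h0) n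
      _ = 1 - W := by rw [hW_def]; rfl
  have hsum_one : s + ∑' i, g i = 1 := by
    have h1 : (1 - W) * s = ∑ i ∈ Finset.range n, f i := by linarith [hsplitf]
    have h2 : (1 - W) * (∑' i, g i) = ∑ i ∈ Finset.range n, g i := by
      nlinarith [hsplitg]
    have h3 : (1 - W) * (s + ∑' i, g i) = (1 - W) * 1 := by
      rw [mul_add, h1, h2, mul_one, hB]
    exact mul_left_cancel₀ (by linarith : (1:ℝ) - W ≠ 0) h3
  have hfnonneg : ∀ i, 0 ≤ f i := fun i =>
    mul_nonneg (Nat.cast_nonneg _) (hseq_pos hI hh0 i).le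
  have hgnonneg : ∀ i, 0 ≤ g i := fun i =>
    mul_nonneg (Nat.cast_nonneg _) (hseq_pos hI hh0 i).le
  have hwitness : ∀ c : Fin n → ℕ, ∀ j : Fin n, 0 < c j →
      0 < (c (blk n hn (n - 1 - j.val)) : ℝ) * hseq n hn P P' Q h0 (n - 1 - j.val) := by
    intro c j hj
    have hb : blk n hn (n - 1 - j.val) = j := by
      apply Fin.ext
      show n - 1 - (n - 1 - j.val) % n = j.val
      have h1 : n - 1 - j.val < n := by omega
      rw [Nat.mod_eq_of_lt h1]
      have := j.isLt
      omega
    rw [hb]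
    exact mul_pos (by exact_mod_cast hj) (hseq_pos hI hh0 _)
  have hspos : 0 < s := by
    obtain ⟨j, hj⟩ := hI.2.2.1
    rw [hs_tsum]
    exact Summable.tsum_pos hsumf hfnonneg (n - 1 - j.val) (hwitness P j hj)
  have hgpos : 0 < ∑' i, g i := by
    obtain ⟨k, hk⟩ := hI.2.2.2
    exact Summable.tsum_pos hsumg hgnonneg (n - 1 - k.val) (hwitness P' k hk)
  have hone_minus : 0 < 1 - s := by linarith [hsum_one, hgpos]
  have hh0pos : 0 < h0 := hh0.1.1
  -- the eigenvector equation
  have hvec0 : vecAt n hn P P' Q h0 0 = ![s, h0, 1 - s] := by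
    rw [vecAt]
    have ht0 : (∑' i : ℕ, (P (blk n hn (i + 0)) : ℝ) * hseq n hn P P' Q h0 (i + 0)) = s := by
      simp only [Nat.add_zero]
      rw [hs_tsum]
    rw [ht0]
    rfl
  have hvecn : vecAt n hn P P' Q h0 n = W • ![s, h0, 1 - s] := by
    rw [vecAt]
    have htn : (∑' i : ℕ, (P (blk n hn (i + n)) : ℝ) * hseq n hn P P' Q h0 (i + n)) = W * s :=
      htailf
    rw [htn, hn_eq hI hh0, ← hW_def]
    funext i
    fin_cases i <;> simp [Pi.smul_apply, smul_eq_mul] <;> ring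
  have hMp : Mp n P P' Q *ᵥ vecAt n hn P P' Q h0 n = vecAt n hn P P' Q h0 0 := by
    have := prod_mulVec hI hh0 n le_rfl
    rwa [Nat.sub_self] at this
  rw [hvec0, hvecn, Matrix.mulVec_smul] at hMp
  have hfinal : Mp n P P' Q *ᵥ ![s, h0, 1 - s] = (1 / W) • ![s, h0, 1 - s] := by
    rw [one_div]
    calc Mp n P P' Q *ᵥ ![s, h0, 1 - s]
        = W⁻¹ • (W • (Mp n P P' Q *ᵥ ![s, h0, 1 - s])) :=
          (inv_smul_smul₀ hWpos.ne' _).symm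
      _ = W⁻¹ • ![s, h0, 1 - s] := by rw [hMp]
  refine ⟨hWpos, ?_, hfinal⟩
  intro i
  fin_cases i
  · simpa using hspos
  · simpa using hh0pos
  · exact hone_minus
end
end

section
/- For every integer n ≥ 1 and every p ∈ I_n, the series Σ_{i=0}^∞ p_{k(i+1)} h_{p,i} defining the split ratio s_p converges (is summable), and its sum satisfies 0 < s_p < 1. -/
open Matrix

noncomputable section

/-!
Write `x_j := h_{p,j} / w_{p,j}`. Rotating the periodic continued fraction that defines `h_{p,0}`
shows that every `x_j` is again a fixed point of a rotated continued fraction, hence lies in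
`(0,1)`, and that `x_j = 1/(a_j + 1/(q_j + x_{j+1}))`. This relation is exactly what keeps the
recursion positive: `w_{p,j} > h_{p,j} > 0` for all `j`. Since `h_{p,j} = h_{p,j+1} + q w_{p,j+1}`
with `q ≥ 1`, the heights at least halve at each step, so `w_{p,j} → 0`. The recursion for `w`
telescopes to `Σ (p_{k(i+1)} + p'_{k(i+1)}) h_{p,i} = w_{p,0} = 1`, and `s_p` together with the
analogous sum for the `p'` is a splitting of `1` into two positive parts.
-/

open Filter Topology

namespace SplitRatio

section ContinuedFraction

lemma cf_cons (a : ℕ) (l : List ℕ) (x : ℝ) : cf (a :: l) x = 1 / ((a : ℝ) + cf l x) := rfl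

lemma cf_append (l₁ l₂ : List ℕ) (x : ℝ) : cf (l₁ ++ l₂) x = cf l₁ (cf l₂ x) := by
  simp [cf, List.foldr_append]

lemma cf_mem_Ioo {l : List ℕ} (hl : ∀ a ∈ l, 1 ≤ a) {x : ℝ} (hx : x ∈ Set.Ioo 0 1) :
    cf l x ∈ Set.Ioo 0 1 := by
  induction l with
  | nil => exact hx
  | cons a l ih =>
    obtain ⟨hpos, hlt⟩ := ih fun b hb => hl b (List.mem_cons_of_mem _ hb)
    have ha : (1 : ℝ) ≤ a := by exact_mod_cast hl a List.mem_cons_self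
    rw [cf_cons]
    exact ⟨by positivity, (div_lt_one (by linarith)).2 (by linarith)⟩

lemma isFixedPt_cf_rotate {a b : ℕ} {t : List ℕ} {x : ℝ}
    (hx : Function.IsFixedPt (cf (a :: b :: t)) x) :
    Function.IsFixedPt (cf (t ++ [a, b])) (cf t x) := by
  rw [Function.IsFixedPt, cf_append t [a, b], ← cf_append [a, b] t]
  exact congrArg (cf t) hx

def blockList (A B : ℕ → ℕ) (m j : ℕ) : List ℕ :=
  (List.range m).flatMap fun i => [A (j + i), B (j + i)]

variable {A B : ℕ → ℕ}

lemma blockList_succ_eq_cons (m j : ℕ) :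
    blockList A B (m + 1) j = A j :: B j :: blockList A B m (j + 1) := by
  simp only [blockList, List.range_succ_eq_map, List.flatMap_cons, List.flatMap_map,
    Nat.add_zero, Nat.add_assoc, Nat.add_comm 1]
  rfl

lemma blockList_succ_eq_append (m j : ℕ) :
    blockList A B (m + 1) j = blockList A B m j ++ [A (j + m), B (j + m)] := by
  simp [blockList, List.range_succ]

lemma one_le_of_mem_blockList (hA : ∀ j, 1 ≤ A j) (hB : ∀ j, 1 ≤ B j) {m j a : ℕ}
    (ha : a ∈ blockList A B m j) : 1 ≤ a := by
  simp only [blockList, List.mem_flatMap, List.mem_cons, List.not_mem_nil, or_false] at ha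
  obtain ⟨i, -, rfl | rfl⟩ := ha
  exacts [hA _, hB _]

/-- `cfTail A B m x₀ j` is the tail `x_j` of the purely periodic continued fraction
with period `[A 0, B 0, …, A m, B m]` whose value is `x₀`. -/
def cfTail (A B : ℕ → ℕ) (m : ℕ) (x₀ : ℝ) : ℕ → ℝ
  | 0 => x₀
  | j + 1 => cf (blockList A B m (j + 1)) (cfTail A B m x₀ j)

lemma cfTail_mem_Ioo_and_isFixedPt (hA : ∀ j, 1 ≤ A j) (hB : ∀ j, 1 ≤ B j) {m : ℕ}
    (hAper : ∀ j, A (j + (m + 1)) = A j) (hBper : ∀ j, B (j + (m + 1)) = B j) {x₀ : ℝ}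
    (hx₀ : x₀ ∈ Set.Ioo 0 1) (hfix : Function.IsFixedPt (cf (blockList A B (m + 1) 0)) x₀)
    (j : ℕ) :
    cfTail A B m x₀ j ∈ Set.Ioo 0 1 ∧
      Function.IsFixedPt (cf (blockList A B (m + 1) j)) (cfTail A B m x₀ j) := by
  induction j with
  | zero => exact ⟨hx₀, hfix⟩
  | succ j ih =>
    refine ⟨cf_mem_Ioo (fun a => one_le_of_mem_blockList hA hB) ih.1, ?_⟩
    have hrot : blockList A B (m + 1) (j + 1) = blockList A B m (j + 1) ++ [A j, B j] := by
      rw [blockList_succ_eq_append, Nat.add_assoc, Nat.add_comm 1 m, hAper, hBper]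
    rw [hrot]
    exact isFixedPt_cf_rotate (blockList_succ_eq_cons (A := A) m j ▸ ih.2)

lemma cfTail_spec (hA : ∀ j, 1 ≤ A j) (hB : ∀ j, 1 ≤ B j) {m : ℕ}
    (hAper : ∀ j, A (j + (m + 1)) = A j) (hBper : ∀ j, B (j + (m + 1)) = B j) {x₀ : ℝ}
    (hx₀ : x₀ ∈ Set.Ioo 0 1) (hfix : Function.IsFixedPt (cf (blockList A B (m + 1) 0)) x₀)
    (j : ℕ) :
    cfTail A B m x₀ j ∈ Set.Ioo 0 1 ∧
      cfTail A B m x₀ j = 1 / (A j + 1 / (B j + cfTail A B m x₀ (j + 1))) := by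
  obtain ⟨hmem, hfixj⟩ := cfTail_mem_Ioo_and_isFixedPt hA hB hAper hBper hx₀ hfix j
  refine ⟨hmem, ?_⟩
  rw [blockList_succ_eq_cons] at hfixj
  have hrel := hfixj.eq
  rw [cf_cons, cf_cons] at hrel
  exact hrel.symm

end ContinuedFraction

lemma width_height_step {a q w x x' : ℝ} (hw : 0 < w) (hx : 0 < x) (hq : 0 ≤ q) (hx' : 0 < x')
    (hrel : x = 1 / (a + 1 / (q + x'))) :
    0 < w - a * (w * x) ∧ w * x - q * (w - a * (w * x)) = (w - a * (w * x)) * x' := by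
  have hd : 0 < q + x' := by linarith
  have hw' : w - a * (w * x) = w * x / (q + x') := by
    have hinv : x * (a * (q + x') + 1) = q + x' := by
      have hne : a + 1 / (q + x') ≠ 0 := fun h => by rw [h, div_zero] at hrel; linarith
      have h1 : x * (a + 1 / (q + x')) = 1 := by rw [hrel]; exact one_div_mul_cancel hne
      field_simp at h1
      linarith
    rw [eq_div_iff hd.ne']
    linear_combination (-w) * hinv
  rw [hw']
  refine ⟨by positivity, ?_⟩
  field_simp
  ring

section Recursion

variable {n : ℕ} {hn : 0 < n} {P P' Q : Fin n → ℕ} {h0 : ℝ}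

lemma blk_add_self (hn : 0 < n) (j : ℕ) : blk n hn (j + n) = blk n hn j := by
  simp [blk, Nat.add_mod_right]

lemma blk_surjective (hn : 0 < n) : Function.Surjective (blk n hn) := fun j =>
  ⟨n - 1 - j, Fin.ext <| by simp only [blk]; rw [Nat.mod_eq_of_lt (by omega)]; omega⟩

lemma aList_eq_blockList :
    aList n hn P P' Q =
      blockList (fun j => P (blk n hn j) + P' (blk n hn j)) (fun j => Q (blk n hn j)) n 0 := by
  simp [aList, blockList]

lemma wseq_succ (j : ℕ) :
    wseq n hn P P' Q h0 (j + 1) =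
      wseq n hn P P' Q h0 j - (P (blk n hn j) + P' (blk n hn j) : ℝ) * hseq n hn P P' Q h0 j :=
  rfl

lemma hseq_succ (j : ℕ) :
    hseq n hn P P' Q h0 (j + 1) =
      hseq n hn P P' Q h0 j - (Q (blk n hn j) : ℝ) * wseq n hn P P' Q h0 (j + 1) :=
  rfl

lemma hseq_pos_and_lt_wseq (hI : memI n P P' Q) (hh0 : isH0 n hn P P' Q h0) (j : ℕ) :
    0 < hseq n hn P P' Q h0 j ∧ hseq n hn P P' Q h0 j < wseq n hn P P' Q h0 j := by
  obtain ⟨m, rfl⟩ : ∃ m, n = m + 1 := ⟨n - 1, by omega⟩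
  set A : ℕ → ℕ := fun j => P (blk _ hn j) + P' (blk _ hn j)
  set B : ℕ → ℕ := fun j => Q (blk _ hn j)
  have htail := cfTail_spec (A := A) (B := B) (fun _ => hI.2.1 _) (fun _ => hI.1 _) (m := m)
    (fun j => by simp only [A, blk_add_self]) (fun j => by simp only [B, blk_add_self]) hh0.1
    (aList_eq_blockList (P' := P') ▸ hh0.2)
  set x := cfTail A B m h0
  have key (j : ℕ) :
      0 < wseq _ hn P P' Q h0 j ∧ hseq _ hn P P' Q h0 j = wseq _ hn P P' Q h0 j * x j := by
    induction j with
    | zero => exact ⟨one_pos, (one_mul h0).symm⟩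
    | succ j ih =>
      obtain ⟨hw, hh⟩ := ih
      have step := width_height_step hw (htail j).1.1 (Nat.cast_nonneg (B j)) (htail (j + 1)).1.1
        (by exact_mod_cast (htail j).2)
      rw [wseq_succ, hseq_succ, wseq_succ, hh]
      exact_mod_cast step
  obtain ⟨hw, hh⟩ := key j
  rw [hh]
  exact ⟨mul_pos hw (htail j).1.1, mul_lt_of_lt_one_right hw (htail j).1.2⟩

lemma two_mul_hseq_succ_le (hI : memI n P P' Q) (hh0 : isH0 n hn P P' Q h0) (j : ℕ) :
    2 * hseq n hn P P' Q h0 (j + 1) ≤ hseq n hn P P' Q h0 j := by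
  obtain ⟨hpos, hlt⟩ := hseq_pos_and_lt_wseq hI hh0 (j + 1)
  have hq : (1 : ℝ) ≤ Q (blk n hn j) := by exact_mod_cast hI.1 _
  nlinarith [(hseq_succ j : hseq n hn P P' Q h0 (j + 1) = _)]

lemma hseq_le_geometric (hI : memI n P P' Q) (hh0 : isH0 n hn P P' Q h0) (j : ℕ) :
    hseq n hn P P' Q h0 j ≤ h0 * (1 / 2) ^ j := by
  induction j with
  | zero => simp [hseq, wh]
  | succ j ih =>
    rw [pow_succ, ← mul_assoc]
    linarith [two_mul_hseq_succ_le hI hh0 j]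

lemma wseq_succ_le_hseq (hI : memI n P P' Q) (hh0 : isH0 n hn P P' Q h0) (j : ℕ) :
    wseq n hn P P' Q h0 (j + 1) ≤ hseq n hn P P' Q h0 j := by
  obtain ⟨hpos, hlt⟩ := hseq_pos_and_lt_wseq hI hh0 (j + 1)
  have hq : (1 : ℝ) ≤ Q (blk n hn j) := by exact_mod_cast hI.1 _
  nlinarith [(hseq_succ j : hseq n hn P P' Q h0 (j + 1) = _)]

lemma tendsto_wseq_atTop (hI : memI n P P' Q) (hh0 : isH0 n hn P P' Q h0) :
    Tendsto (wseq n hn P P' Q h0) atTop (𝓝 0) := by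
  rw [← tendsto_add_atTop_iff_nat 1]
  refine squeeze_zero (fun j => ?_) (fun j => (wseq_succ_le_hseq hI hh0 j).trans
    (hseq_le_geometric hI hh0 j)) ?_
  · exact ((hseq_pos_and_lt_wseq hI hh0 (j + 1)).1.trans (hseq_pos_and_lt_wseq hI hh0 _).2).le
  · simpa using (tendsto_pow_atTop_nhds_zero_of_lt_one (by norm_num : (0 : ℝ) ≤ 1 / 2)
      (by norm_num)).const_mul h0

lemma sum_range_mul_hseq (N : ℕ) :
    ∑ i ∈ Finset.range N, (P (blk n hn i) + P' (blk n hn i) : ℝ) * hseq n hn P P' Q h0 i =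
      1 - wseq n hn P P' Q h0 N := by
  induction N with
  | zero => simp [wseq, wh]
  | succ N ih => rw [Finset.sum_range_succ, ih, wseq_succ]; ring

lemma hasSum_mul_hseq (hI : memI n P P' Q) (hh0 : isH0 n hn P P' Q h0) :
    HasSum (fun i => (P (blk n hn i) + P' (blk n hn i) : ℝ) * hseq n hn P P' Q h0 i) 1 := by
  rw [hasSum_iff_tendsto_nat_of_nonneg
    (fun i => mul_nonneg (by positivity) (hseq_pos_and_lt_wseq hI hh0 i).1.le)]
  simpa [sum_range_mul_hseq] using (tendsto_wseq_atTop hI hh0).const_sub 1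

lemma summable_mul_hseq_of_le (hI : memI n P P' Q) (hh0 : isH0 n hn P P' Q h0)
    {R : Fin n → ℕ} (hR : ∀ j, R j ≤ P j + P' j) :
    Summable fun i => (R (blk n hn i) : ℝ) * hseq n hn P P' Q h0 i := by
  refine (hasSum_mul_hseq hI hh0).summable.of_nonneg_of_le
    (fun i => mul_nonneg (by positivity) (hseq_pos_and_lt_wseq hI hh0 i).1.le) fun i => ?_
  gcongr
  · exact (hseq_pos_and_lt_wseq hI hh0 i).1.le
  · exact_mod_cast hR _

lemma tsum_mul_hseq_pos (hI : memI n P P' Q) (hh0 : isH0 n hn P P' Q h0)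
    {R : Fin n → ℕ} (hR : ∀ j, R j ≤ P j + P' j) (hRpos : ∃ j, 0 < R j) :
    0 < ∑' i, (R (blk n hn i) : ℝ) * hseq n hn P P' Q h0 i := by
  obtain ⟨j, hj⟩ := hRpos
  obtain ⟨i, rfl⟩ := blk_surjective hn j
  refine (summable_mul_hseq_of_le hI hh0 hR).tsum_pos
    (fun i => mul_nonneg (by positivity) (hseq_pos_and_lt_wseq hI hh0 i).1.le) i ?_
  exact mul_pos (by exact_mod_cast hj) (hseq_pos_and_lt_wseq hI hh0 i).1

end Recursion

end SplitRatio

/-- the series `Σ_{i=0}^∞ p_{k(i+1)} h_{p,i}` defining `s_p` is summable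
and `0 < s_p < 1`. -/
theorem stmt4 (n : ℕ) (hn : 0 < n) (P P' Q : Fin n → ℕ) (hI : memI n P P' Q)
    (h0 : ℝ) (hh0 : isH0 n hn P P' Q h0) :
    Summable (fun i : ℕ => (P (blk n hn i) : ℝ) * hseq n hn P P' Q h0 i) ∧
    0 < splitRatio n hn P P' Q h0 ∧ splitRatio n hn P P' Q h0 < 1 := by
  have hPle : ∀ j, P j ≤ P j + P' j := fun j => Nat.le_add_right _ _
  have hP'le : ∀ j, P' j ≤ P j + P' j := fun j => Nat.le_add_left _ _
  have hP := SplitRatio.summable_mul_hseq_of_le hI hh0 hPle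
  have hP' := SplitRatio.summable_mul_hseq_of_le hI hh0 hP'le
  have hsum := SplitRatio.hasSum_mul_hseq hI hh0
  simp only [add_mul] at hsum
  have hsplit : splitRatio n hn P P' Q h0 +
      ∑' i, (P' (blk n hn i) : ℝ) * hseq n hn P P' Q h0 i = 1 :=
    (hP.hasSum.add hP'.hasSum).unique hsum
  refine ⟨hP, SplitRatio.tsum_mul_hseq_pos hI hh0 hPle hI.2.2.1, ?_⟩
  linarith [SplitRatio.tsum_mul_hseq_pos hI hh0 hP'le hI.2.2.2]
end
end
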